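/- arXiv:1210.7064 — 5 statements merged into one kernel-verified Lean document; each statement's English description precedes it below -/
import Mathlib

section
/- Let L be a finite lattice with top T, bottom B, and join-generating set E ⊆ L \ {B}. If X ⊆ E is c-independent (admits an enumeration with strictly increasing suffix joins) and ⋁X < T, then there exists p ∈ E \ X such that X ∪ {p} is c-independent. -/
/-! Writing `⊤ = ⋁S` with `S ⊆ E`, the hypothesis `⋁X < ⊤` yields some `p ∈ S` with
`p ≰ ⋁X`. Prepending `p` to an enumeration of `X` with strictly decreasing suffix joins adds
the strict step `⋁X < p ⊔ ⋁X` in front, so `X ∪ {p}` is c-independent. -/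

/-- `X` is c-independent: it admits an enumeration whose suffix joins form a
strictly decreasing chain. -/
def CIndep {L : Type*} [Lattice L] [OrderBot L] [DecidableEq L] (X : Finset L) : Prop :=
  ∃ l : List L, l.Nodup ∧ l.toFinset = X ∧
    ∀ i, i + 1 < l.length →
      (l.drop (i + 1)).foldr (· ⊔ ·) ⊥ < (l.drop i).foldr (· ⊔ ·) ⊥

lemma List.foldr_sup_bot_eq_toFinset_sup {L : Type*} [Lattice L] [OrderBot L] [DecidableEq L]
    (l : List L) : l.foldr (· ⊔ ·) ⊥ = l.toFinset.sup id := by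
  induction l with
  | nil => simp
  | cons a t ih => simp [ih]

lemma Finset.exists_not_le_of_not_sup_le {α β : Type*} [SemilatticeSup α] [OrderBot α]
    {s : Finset β} {f : β → α} {a : α} (h : ¬ s.sup f ≤ a) : ∃ b ∈ s, ¬ f b ≤ a := by
  simpa only [Finset.sup_le_iff, not_forall, exists_prop] using h

lemma CIndep.insert_of_not_le_sup {L : Type*} [Lattice L] [OrderBot L] [DecidableEq L]
    {X : Finset L} (hX : CIndep X) {p : L} (hp : ¬ p ≤ X.sup id) : CIndep (insert p X) := by
  obtain ⟨l, hnd, rfl, hchain⟩ := hX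
  have hpl : p ∉ l := fun h => hp (Finset.le_sup (f := id) (List.mem_toFinset.mpr h))
  refine ⟨p :: l, List.nodup_cons.mpr ⟨hpl, hnd⟩, by simp, ?_⟩
  rintro (_ | k) hk
  · simp only [List.drop_succ_cons, List.drop_zero, List.foldr_cons,
      List.foldr_sup_bot_eq_toFinset_sup]
    exact right_lt_sup.mpr hp
  · exact hchain k (by simpa using hk)

theorem cIndep_extend_general {L : Type*} [Lattice L] [BoundedOrder L]
    [DecidableEq L]
    (E : Set L)
    (gen : ∀ l : L, ∃ S : Finset L, ↑S ⊆ E ∧ l = S.sup id)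
    (X : Finset L) (hind : CIndep X) (hlt : X.sup id < ⊤) :
    ∃ p ∈ E, p ∉ X ∧ CIndep (insert p X) := by
  obtain ⟨S, hSE, hS⟩ := gen ⊤
  obtain ⟨p, hpS, hp⟩ : ∃ p ∈ S, ¬ p ≤ X.sup id :=
    Finset.exists_not_le_of_not_sup_le (hS ▸ hlt.not_ge)
  exact ⟨p, hSE hpS, fun hpX => hp (Finset.le_sup (f := id) hpX),
    hind.insert_of_not_le_sup hp⟩

/-- If `X ⊆ E` is c-independent and `⋁X < ⊤` in a finite lattice `L` join-generated
by `E ⊆ L \ {⊥}`, then `X ∪ {p}` is c-independent for some `p ∈ E \ X`. -/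
theorem cIndep_extend {L : Type*} [Lattice L] [BoundedOrder L] [Fintype L]
    [DecidableEq L]
    (E : Set L) (hE : (⊥ : L) ∉ E)
    (gen : ∀ l : L, ∃ S : Finset L, ↑S ⊆ E ∧ l = S.sup id)
    (X : Finset L) (hX : ↑X ⊆ E) (hind : CIndep X) (hlt : X.sup id < ⊤) :
    ∃ p ∈ E, p ∉ X ∧ CIndep (insert p X) :=
  cIndep_extend_general E gen X hind hlt
end

section
/- Let (E,H) be a hereditary collection on a finite set E with rank function r(X) = max{|I| : I ⊆ X, I ∈ H}. Then a function f : 2^E → ℕ equals the rank function of some hereditary collection if and only if f satisfies: (A1) monotonicity (X ⊆ Y implies fX ≤ fY); (A2) for every X there is I ⊆ X with |I| = f(I) = f(X); (A3) if f(X) = |X| and Y ⊆ X then f(Y) = |Y|. -/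
/-!
The rank of a hereditary collection `H` is attained by a member of `H`, and a set of full rank
must itself be that member; this gives (A1)–(A3). Conversely, `f` is the rank function of its
free sets `{I | f I = |I|}`: (A3) makes them hereditary, (A1) bounds their rank by `f`, and (A2)
provides a free set attaining `f X` inside every `X`.
-/

section HereditaryRank

open Finset

variable {E : Type*} [DecidableEq E]

def hereditaryRank (H : Finset (Finset E)) (X : Finset E) : ℕ :=
  (X.powerset.filter (· ∈ H)).sup card

variable {H : Finset (Finset E)} {I X Y : Finset E}

theorem card_le_hereditaryRank (hI : I ∈ H) (hIX : I ⊆ X) : #I ≤ hereditaryRank H X :=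
  le_sup (mem_filter.2 ⟨mem_powerset.2 hIX, hI⟩)

theorem hereditaryRank_le_card (X : Finset E) : hereditaryRank H X ≤ #X :=
  Finset.sup_le fun _ hI => card_le_card (mem_powerset.1 (mem_filter.1 hI).1)

theorem hereditaryRank_mono (hXY : X ⊆ Y) : hereditaryRank H X ≤ hereditaryRank H Y :=
  Finset.sup_le fun _ hI =>
    card_le_hereditaryRank (mem_filter.1 hI).2 ((mem_powerset.1 (mem_filter.1 hI).1).trans hXY)

theorem hereditaryRank_of_mem (hI : I ∈ H) : hereditaryRank H I = #I :=
  (hereditaryRank_le_card I).antisymm (card_le_hereditaryRank hI Subset.rfl)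

theorem exists_mem_card_eq_hereditaryRank (hH : ∅ ∈ H) (X : Finset E) :
    ∃ I ⊆ X, I ∈ H ∧ #I = hereditaryRank H X := by
  have hne : (X.powerset.filter (· ∈ H)).Nonempty :=
    ⟨∅, mem_filter.2 ⟨empty_mem_powerset X, hH⟩⟩
  obtain ⟨I, hI, hIsup⟩ := exists_mem_eq_sup _ hne card
  exact ⟨I, mem_powerset.1 (mem_filter.1 hI).1, (mem_filter.1 hI).2, hIsup.symm⟩

theorem mem_of_hereditaryRank_eq_card (hH : ∅ ∈ H) (hX : hereditaryRank H X = #X) : X ∈ H := by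
  obtain ⟨I, hIX, hI, hcard⟩ := exists_mem_card_eq_hereditaryRank hH X
  rwa [eq_of_subset_of_card_le hIX (hcard.trans hX).ge] at hI

theorem hereditaryRank_filter_eq_card_eq [Fintype E] {f : Finset E → ℕ}
    (hmono : ∀ X Y : Finset E, X ⊆ Y → f X ≤ f Y)
    (hbasis : ∀ X : Finset E, ∃ I ⊆ X, #I = f I ∧ f I = f X) (X : Finset E) :
    hereditaryRank (univ.filter fun I => f I = #I) X = f X := by
  refine le_antisymm (Finset.sup_le fun I hI => ?_) ?_
  · simp only [mem_filter, mem_powerset, mem_univ, true_and] at hI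
    exact hI.2 ▸ hmono I X hI.1
  · obtain ⟨I, hIX, hcard, hfI⟩ := hbasis X
    rw [← hfI, ← hcard]
    exact card_le_hereditaryRank (by simp [hcard]) hIX

end HereditaryRank

/-- A function `f : 2^E → ℕ` is the rank function of some hereditary collection
iff it satisfies (A1) monotonicity, (A2) for every `X` there is `I ⊆ X` with
`|I| = f(I) = f(X)`, and (A3) if `f(X) = |X|` and `Y ⊆ X` then `f(Y) = |Y|`. -/
theorem rank_function_characterization {E : Type*} [Fintype E] [DecidableEq E]
    (f : Finset E → ℕ) :
    (∃ H : Finset (Finset E), H.Nonempty ∧ (∀ I ∈ H, ∀ J ⊆ I, J ∈ H) ∧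
        ∀ X : Finset E, f X = ((X.powerset.filter (· ∈ H)).sup Finset.card)) ↔
      ((∀ X Y : Finset E, X ⊆ Y → f X ≤ f Y) ∧
        (∀ X : Finset E, ∃ I ⊆ X, I.card = f I ∧ f I = f X) ∧
        (∀ X Y : Finset E, f X = X.card → Y ⊆ X → f Y = Y.card)) := by
  constructor
  · rintro ⟨H, ⟨I₀, hI₀⟩, hher, hf⟩
    obtain rfl : f = hereditaryRank H := funext hf
    have hempty : ∅ ∈ H := hher I₀ hI₀ ∅ (Finset.empty_subset _)
    refine ⟨fun X Y => hereditaryRank_mono, fun X => ?_, fun X Y hX hYX => ?_⟩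
    · obtain ⟨I, hIX, hI, hcard⟩ := exists_mem_card_eq_hereditaryRank hempty X
      exact ⟨I, hIX, (hereditaryRank_of_mem hI).symm, (hereditaryRank_of_mem hI).trans hcard⟩
    · exact hereditaryRank_of_mem (hher X (mem_of_hereditaryRank_eq_card hempty hX) Y hYX)
  · rintro ⟨hmono, hbasis, hfree⟩
    refine ⟨Finset.univ.filter fun I => f I = I.card, ⟨∅, ?_⟩, fun I hI J hJI => ?_, fun X => ?_⟩
    · obtain ⟨I, hI, hcard, -⟩ := hbasis ∅
      obtain rfl := Finset.subset_empty.1 hI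
      simpa using hcard.symm
    · simp only [Finset.mem_filter, Finset.mem_univ, true_and] at hI ⊢
      exact hfree I J hI hJI
    · exact (hereditaryRank_filter_eq_card_eq hmono hbasis X).symm
end

section
/- Let (E,H) be a hereditary collection of rank r > 2 on a finite set E. The following are equivalent: (i) (E,H) has no circuit of size < r; (ii) every subset of E of size ≤ r−1 belongs to H; (iii) every subset of E of size ≤ r−2 is a flat. -/
/-!
A set outside `H` contains a circuit, so "no circuit has fewer than `r` elements" says exactly
that all sets of fewer than `r` elements lie in `H`. A set of size `k + 1` arises by adding one
point to a set of size `k`, so flatness of all `k`-sets propagates membership in `H` from size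
`k` to size `k + 1`, and conversely.
-/

def IsFlat {E : Type*} [DecidableEq E] (H : Set (Finset E)) (X : Finset E) : Prop :=
  ∀ I ∈ H, I ⊆ X → ∀ p ∉ X, insert p I ∈ H

section HereditaryCollection

variable {E : Type*} (H : Set (Finset E))

def IsCircuit (C : Finset E) : Prop :=
  C ∉ H ∧ ∀ D ⊂ C, D ∈ H

variable {H}

theorem exists_isCircuit_subset {X : Finset E} (hX : X ∉ H) : ∃ C ⊆ X, IsCircuit H C := by
  obtain ⟨C, ⟨hCX, hC⟩, hmin⟩ :=
    wellFounded_lt.has_min {C : Finset E | C ⊆ X ∧ C ∉ H} ⟨X, subset_rfl, hX⟩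
  refine ⟨C, hCX, hC, fun D hDC => ?_⟩
  by_contra hD
  exact hmin D ⟨hDC.subset.trans hCX, hD⟩ hDC

theorem forall_isCircuit_not_card_lt_iff (k : ℕ) :
    (∀ C, IsCircuit H C → ¬ C.card < k) ↔ ∀ X : Finset E, X.card < k → X ∈ H := by
  constructor
  · intro h X hX
    by_contra hXH
    obtain ⟨C, hCX, hC⟩ := exists_isCircuit_subset hXH
    exact h C hC ((Finset.card_le_card hCX).trans_lt hX)
  · intro h C hC hCk
    exact hC.1 (h C hCk)

theorem forall_card_le_succ_mem_iff_forall_isFlat [DecidableEq E] (hempty : ∅ ∈ H) (k : ℕ) :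
    (∀ X : Finset E, X.card ≤ k + 1 → X ∈ H) ↔ ∀ X : Finset E, X.card ≤ k → IsFlat H X := by
  constructor
  · intro h X hX I _ hIX p _
    apply h
    calc (insert p I).card ≤ I.card + 1 := Finset.card_insert_le p I
      _ ≤ k + 1 := by gcongr; exact (Finset.card_le_card hIX).trans hX
  · intro h X
    induction X using Finset.induction_on with
    | empty => exact fun _ => hempty
    | insert p Y hpY ih =>
      intro hcard
      rw [Finset.card_insert_of_notMem hpY] at hcard
      have hY : Y.card ≤ k := by omega
      exact h Y hY Y (ih (by omega)) subset_rfl p hpY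

end HereditaryCollection

theorem paving_characterizations_general {E : Type*} [DecidableEq E]
    (H : Set (Finset E)) (hne : H.Nonempty)
    (hdown : ∀ I ∈ H, ∀ J ⊆ I, J ∈ H)
    (r : ℕ)
    (hr : 2 < r) :
    ((∀ C : Finset E, C ∉ H → (∀ D ⊂ C, D ∈ H) → ¬ C.card < r) ↔
        (∀ X : Finset E, X.card ≤ r - 1 → X ∈ H)) ∧
      ((∀ X : Finset E, X.card ≤ r - 1 → X ∈ H) ↔
        (∀ X : Finset E, X.card ≤ r - 2 → IsFlat H X)) := by
  obtain ⟨I, hI⟩ := hne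
  have hempty : ∅ ∈ H := hdown I hI ∅ (Finset.empty_subset I)
  have hle_pred : ∀ X : Finset E, X.card ≤ r - 1 ↔ X.card < r := fun X => by omega
  have hpred : r - 1 = r - 2 + 1 := by omega
  constructor
  · simpa only [IsCircuit, and_imp, hle_pred] using forall_isCircuit_not_card_lt_iff (H := H) r
  · rw [hpred]
    exact forall_card_le_succ_mem_iff_forall_isFlat hempty (r - 2)

/-- For a hereditary collection of rank `r > 2`, the following are equivalent:
(i) there is no circuit of size `< r`; (ii) every subset of size `≤ r - 1` is
independent; (iii) every subset of size `≤ r - 2` is a flat. -/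
theorem paving_characterizations {E : Type*} [Fintype E] [DecidableEq E]
    (H : Set (Finset E)) (hne : H.Nonempty)
    (hdown : ∀ I ∈ H, ∀ J ⊆ I, J ∈ H)
    (r : ℕ) (hub : ∀ I ∈ H, I.card ≤ r) (hex : ∃ I ∈ H, I.card = r)
    (hr : 2 < r) :
    ((∀ C : Finset E, C ∉ H → (∀ D ⊂ C, D ∈ H) → ¬ C.card < r) ↔
        (∀ X : Finset E, X.card ≤ r - 1 → X ∈ H)) ∧
      ((∀ X : Finset E, X.card ≤ r - 1 → X ∈ H) ↔
        (∀ X : Finset E, X.card ≤ r - 2 → IsFlat H X)) :=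
  paving_characterizations_general H hne hdown r hr
end

section
/- Let (E,H) be a paving hereditary collection of rank r (every subset of size ≤ r−1 is in H) on a finite set E. If every (r−1)-subset X of E satisfies Cl(X) ≠ E, then (E,H) is a matroid (satisfies the exchange property). -/
/-- The closure of `X`: the intersection of all flats containing `X`. -/
def ClSet {E : Type*} [DecidableEq E] (H : Set (Finset E)) (X : Finset E) : Set E :=
  {e | ∀ Z : Finset E, IsFlat H Z → X ⊆ Z → e ∈ Z}

namespace IsFlat

variable {E : Type*} [DecidableEq E] {H : Set (Finset E)} {Z I J : Finset E}

theorem subset_of_forall_insert_notMem (hZ : IsFlat H Z) (hJ : J ∈ H) (hJZ : J ⊆ Z)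
    (hIJ : ∀ i ∈ I, i ∉ J → insert i J ∉ H) : I ⊆ Z := by
  intro i hiI
  by_contra hiZ
  exact hIJ i hiI (fun hiJ => hiZ (hJZ hiJ)) (hZ J hJ hJZ i hiZ)

theorem mem_of_subset_of_card_eq {r : ℕ} (hZ : IsFlat H Z) (hub : ∀ I ∈ H, I.card ≤ r)
    (hI : I ∈ H) (hIr : I.card = r) (hIZ : I ⊆ Z) (e : E) : e ∈ Z := by
  by_contra heZ
  have hcard := hub _ (hZ I hI hIZ e heZ)
  rw [Finset.card_insert_of_notMem (fun heI => heZ (hIZ heI))] at hcard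
  omega

end IsFlat

theorem clSet_eq_univ_of_forall_insert_notMem {E : Type*} [DecidableEq E]
    {H : Set (Finset E)} {r : ℕ} (hub : ∀ I ∈ H, I.card ≤ r) {I J : Finset E}
    (hI : I ∈ H) (hIr : I.card = r) (hJ : J ∈ H) (hIJ : ∀ i ∈ I, i ∉ J → insert i J ∉ H) :
    ClSet H J = Set.univ :=
  Set.eq_univ_of_forall fun e _ hZ hJZ =>
    hZ.mem_of_subset_of_card_eq hub hI hIr (hZ.subset_of_forall_insert_notMem hJ hJZ hIJ) e

theorem paving_closure_ne_univ_matroid_general {E : Type*} [DecidableEq E]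
    (H : Set (Finset E))
    (r : ℕ) (hub : ∀ I ∈ H, I.card ≤ r)
    (hpav : ∀ X : Finset E, X.card ≤ r - 1 → X ∈ H)
    (hcl : ∀ X : Finset E, X.card = r - 1 → ClSet H X ≠ Set.univ) :
    ∀ I ∈ H, ∀ J ∈ H, I.card = J.card + 1 →
      ∃ i ∈ I, i ∉ J ∧ insert i J ∈ H := by
  intro I hI J hJ hcard
  by_cases hsmall : J.card + 1 ≤ r - 1
  · obtain ⟨i, hiI, hiJ⟩ := Finset.exists_mem_notMem_of_card_lt_card (s := J) (t := I) (by omega)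
    exact ⟨i, hiI, hiJ, hpav _ (by rw [Finset.card_insert_of_notMem hiJ]; omega)⟩
  · have hIr : I.card = r := by have := hub I hI; omega
    by_contra! hnone
    exact hcl J (by omega) (clSet_eq_univ_of_forall_insert_notMem hub hI hIr hJ hnone)

/-- A paving hereditary collection of rank `r` in which every `(r-1)`-subset has
closure different from `E` is a matroid (satisfies the exchange property). -/
theorem paving_closure_ne_univ_matroid {E : Type*} [Fintype E] [DecidableEq E]
    (H : Set (Finset E)) (hne : H.Nonempty)
    (hdown : ∀ I ∈ H, ∀ J ⊆ I, J ∈ H)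
    (r : ℕ) (hub : ∀ I ∈ H, I.card ≤ r) (hex : ∃ I ∈ H, I.card = r)
    (hpav : ∀ X : Finset E, X.card ≤ r - 1 → X ∈ H)
    (hcl : ∀ X : Finset E, X.card = r - 1 → ClSet H X ≠ Set.univ) :
    ∀ I ∈ H, ∀ J ∈ H, I.card = J.card + 1 →
      ∃ i ∈ I, i ∉ J ∧ insert i J ∈ H :=
  paving_closure_ne_univ_matroid_general H r hub hpav hcl
end

section
/- Let L be a finite lattice and suppose a covers b in L, with b strictly meet irreducible (b = y ∧ z implies b = y or b = z). Then the equivalence relation ρ_{a,b} that identifies a with b and is the identity elsewhere is a ∨-congruence on L, minimal among nontrivial ∨-congruences. -/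
/-!
Joining with `z` either collapses the pair: `a ≤ b ⊔ z`, so `a ⊔ z = b ⊔ z`; or it fixes both ends:
otherwise `b ≤ a ⊓ (b ⊔ z) < a` forces `a ⊓ (b ⊔ z) = b` by the covering, and meet irreducibility
of `b` gives `b ⊔ z = b`, so `z ≤ b ≤ a`. Minimality holds because a nontrivial equivalence inside
`ρ_{a,b}` must relate `a` and `b`.
-/

def identifyPair {α : Type*} (a b : α) (x y : α) : Prop :=
  x = y ∨ (x = a ∧ y = b) ∨ (x = b ∧ y = a)

namespace identifyPair

variable {α : Type*} {a b : α}

theorem equivalence (a b : α) : Equivalence (identifyPair a b) where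
  refl _ := Or.inl rfl
  symm := by
    rintro x y (rfl | ⟨rfl, rfl⟩ | ⟨rfl, rfl⟩) <;> simp [identifyPair]
  trans := by
    rintro x y z (rfl | ⟨rfl, rfl⟩ | ⟨rfl, rfl⟩) (rfl | ⟨h, rfl⟩ | ⟨h, rfl⟩) <;>
      simp_all [identifyPair]

theorem rel_of_equivalence {σ : α → α → Prop} (hσ : Equivalence σ) (hab : σ a b) {x y : α} :
    identifyPair a b x y → σ x y := by
  rintro (rfl | ⟨rfl, rfl⟩ | ⟨rfl, rfl⟩)
  exacts [hσ.refl x, hab, hσ.symm hab]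

theorem rel_of_nontrivial_le {σ : α → α → Prop} (hσ : Equivalence σ)
    (hne : ∃ x y, x ≠ y ∧ σ x y) (hle : ∀ x y, σ x y → identifyPair a b x y) : σ a b := by
  obtain ⟨x, y, hxy, h⟩ := hne
  rcases hle x y h with rfl | ⟨rfl, rfl⟩ | ⟨rfl, rfl⟩
  exacts [absurd rfl hxy, h, hσ.symm h]

end identifyPair

section Lattice

variable {L : Type*} [Lattice L] {a b : L}

theorem CovBy.le_sup_or_le_of_infIrred (h : b ⋖ a) (hb : InfIrred b) (z : L) :
    a ≤ b ⊔ z ∨ z ≤ b := by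
  refine or_iff_not_imp_left.2 fun ha => ?_
  have hb_le : b ≤ a ⊓ (b ⊔ z) := le_inf h.le le_sup_left
  have hmeet : a ⊓ (b ⊔ z) = b := by
    rcases h.eq_or_eq hb_le inf_le_left with hb' | ha'
    · exact hb'
    · exact absurd (ha' ▸ inf_le_right) ha
  rcases hb.2 hmeet with ha' | hbz
  · exact absurd ha' h.ne'
  · exact sup_eq_left.1 hbz

theorem identifyPair.sup_right (h : b ⋖ a) (hb : InfIrred b) {x y : L}
    (hxy : identifyPair a b x y) (z : L) : identifyPair a b (x ⊔ z) (y ⊔ z) := by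
  have hab : identifyPair a b (a ⊔ z) (b ⊔ z) := by
    rcases h.le_sup_or_le_of_infIrred hb z with ha | hz
    · exact Or.inl <| le_antisymm (sup_le ha le_sup_right) (sup_le_sup_right h.le z)
    · exact Or.inr <| Or.inl ⟨sup_eq_left.2 (hz.trans h.le), sup_eq_left.2 hz⟩
  rcases hxy with rfl | ⟨rfl, rfl⟩ | ⟨rfl, rfl⟩
  exacts [Or.inl rfl, hab, (identifyPair.equivalence _ _).symm hab]

end Lattice

theorem rho_ab_minimal_join_congruence_general {L : Type*} [Lattice L]
    (a b : L) (hcov : b ⋖ a)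
    (hsmi : ∀ y z : L, b = y ⊓ z → b = y ∨ b = z)
    (ρ : L → L → Prop)
    (hρ : ∀ x y : L, ρ x y ↔ (x = y ∨ (x = a ∧ y = b) ∨ (x = b ∧ y = a))) :
    Equivalence ρ ∧
      (∀ x y z : L, ρ x y → ρ (x ⊔ z) (y ⊔ z)) ∧
      (∀ σ : L → L → Prop, Equivalence σ →
        (∀ x y z : L, σ x y → σ (x ⊔ z) (y ⊔ z)) →
        (∃ x y : L, x ≠ y ∧ σ x y) →
        (∀ x y : L, σ x y → ρ x y) →
        ∀ x y : L, ρ x y ↔ σ x y) := by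
  obtain rfl : ρ = identifyPair a b := funext₂ fun x y => propext (hρ x y)
  have hb : InfIrred b :=
    ⟨hcov.lt.not_isMax, fun y z h => (hsmi y z h.symm).imp Eq.symm Eq.symm⟩
  refine ⟨identifyPair.equivalence a b, fun x y z hxy => hxy.sup_right hcov hb z, ?_⟩
  intro σ hσ _ hne hle x y
  exact ⟨identifyPair.rel_of_equivalence hσ (identifyPair.rel_of_nontrivial_le hσ hne hle), hle x y⟩

/-- If `a` covers `b` in a finite lattice and `b` is strictly meet irreducible,
then the equivalence relation identifying `a` with `b` (and nothing else) is a
∨-congruence, minimal among nontrivial ∨-congruences. -/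
theorem rho_ab_minimal_join_congruence {L : Type*} [Lattice L] [Fintype L]
    (a b : L) (hcov : b ⋖ a)
    (hsmi : ∀ y z : L, b = y ⊓ z → b = y ∨ b = z)
    (ρ : L → L → Prop)
    (hρ : ∀ x y : L, ρ x y ↔ (x = y ∨ (x = a ∧ y = b) ∨ (x = b ∧ y = a))) :
    Equivalence ρ ∧
      (∀ x y z : L, ρ x y → ρ (x ⊔ z) (y ⊔ z)) ∧
      (∀ σ : L → L → Prop, Equivalence σ →
        (∀ x y z : L, σ x y → σ (x ⊔ z) (y ⊔ z)) →
        (∃ x y : L, x ≠ y ∧ σ x y) →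
        (∀ x y : L, σ x y → ρ x y) →
        ∀ x y : L, ρ x y ↔ σ x y) :=
  rho_ab_minimal_join_congruence_general a b hcov hsmi ρ hρ
end
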